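/- arXiv:1908.03189 — 3 statements merged into one kernel-verified Lean document; each statement's English description precedes it below -/
import Mathlib

section
/- Let u and t be positive integers and let M be an n×n zero-one matrix such that w(M) > t·u·n^{2 - 1/u}. Then the number of copies of K_{u,t} in M is at least (1/(u^{ut-t+u}·t^t)) · w(M)^{tu} / n^{2ut-u-t}. -/
open Finset

/-- `M` contains `A`: strictly increasing row and column injections preserving 1-entries. -/
def Contains {r s m n : ℕ} (A : Fin r → Fin s → Bool) (M : Fin m → Fin n → Bool) : Prop :=
  ∃ (φ : Fin r → Fin m) (ψ : Fin s → Fin n),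
    StrictMono φ ∧ StrictMono ψ ∧ ∀ i j, A i j = true → M (φ i) (ψ j) = true

/-- The weight of a zero-one matrix: the number of its 1-entries. -/
def weight {m n : ℕ} (M : Fin m → Fin n → Bool) : ℕ :=
  (univ.filter fun p : Fin m × Fin n => M p.1 p.2 = true).card

/-- `matEx n A`: the maximum weight of an `n × n` zero-one matrix not containing `A`. -/
noncomputable def matEx {r s : ℕ} (n : ℕ) (A : Fin r → Fin s → Bool) : ℕ :=
  sSup {w : ℕ | ∃ M : Fin n → Fin n → Bool, ¬ Contains A M ∧ weight M = w}

/-- `A` is column-`t`-partite: the columns can be partitioned into `t` intervals so that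
every row of each resulting submatrix has at most one 1-entry. -/
def ColumnPartite {r s : ℕ} (t : ℕ) (A : Fin r → Fin s → Bool) : Prop :=
  ∃ f : Fin s → Fin t, Monotone f ∧
    ∀ (i : Fin r) (p : Fin t), (univ.filter fun j => f j = p ∧ A i j = true).card ≤ 1

/-- `A` is row-`t`-partite. -/
def RowPartite {r s : ℕ} (t : ℕ) (A : Fin r → Fin s → Bool) : Prop :=
  ∃ f : Fin r → Fin t, Monotone f ∧
    ∀ (j : Fin s) (p : Fin t), (univ.filter fun i => f i = p ∧ A i j = true).card ≤ 1

/-- The number of copies of `K_{u,t}` in `M`: pairs of a `u`-set of rows and a `t`-set of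
columns all of whose intersections are 1-entries. -/
def numCopies {m n : ℕ} (u t : ℕ) (M : Fin m → Fin n → Bool) : ℕ :=
  (((univ : Finset (Fin m)).powersetCard u ×ˢ (univ : Finset (Fin n)).powersetCard t).filter
    fun p => ∀ i ∈ p.1, ∀ j ∈ p.2, M i j = true).card

theorem block_index_lt {m k : ℕ} (hk : k ∣ m) (p : Fin k) (i : Fin (m / k)) :
    (p : ℕ) * (m / k) + (i : ℕ) < m :=
  calc (p : ℕ) * (m / k) + (i : ℕ) < ((p : ℕ) + 1) * (m / k) := by
        rw [add_mul, one_mul]; exact Nat.add_lt_add_left i.2 _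
    _ ≤ k * (m / k) := Nat.mul_le_mul_right _ p.2
    _ = m := Nat.mul_div_cancel' hk

/-- The `p`-th horizontal block of `M` (blocks of consecutive rows of height `m / k`). -/
def horizontalBlock {m n : ℕ} (k : ℕ) (hk : k ∣ m) (p : Fin k) (M : Fin m → Fin n → Bool) :
    Fin (m / k) → Fin n → Bool :=
  fun i j => M ⟨(p : ℕ) * (m / k) + (i : ℕ), block_index_lt hk p i⟩ j

/-- The `(p,q)` block of an `n × n` matrix: intersection of the `p`-th horizontal block and
the `q`-th vertical block. -/
def matBlock {n : ℕ} (k : ℕ) (hk : k ∣ n) (p q : Fin k) (M : Fin n → Fin n → Bool) :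
    Fin (n / k) → Fin (n / k) → Bool :=
  fun i j => M ⟨(p : ℕ) * (n / k) + (i : ℕ), block_index_lt hk p i⟩
               ⟨(q : ℕ) * (n / k) + (j : ℕ), block_index_lt hk q j⟩

/-- An `n × m` matrix is `r`-balanced: `r ∣ n` and in every column, the `r` consecutive
row-intervals of length `n / r` contain equally many 1-entries. -/
def RBalanced {n m : ℕ} (r : ℕ) (M : Fin n → Fin m → Bool) : Prop :=
  r ∣ n ∧ ∀ (c : Fin m) (i₁ i₂ : Fin r),
    (univ.filter fun a : Fin n =>
      (i₁ : ℕ) * (n / r) ≤ (a : ℕ) ∧ (a : ℕ) < ((i₁ : ℕ) + 1) * (n / r) ∧ M a c = true).card =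
    (univ.filter fun a : Fin n =>
      (i₂ : ℕ) * (n / r) ≤ (a : ℕ) ∧ (a : ℕ) < ((i₂ : ℕ) + 1) * (n / r) ∧ M a c = true).card

/-- The bipartite graph of a zero-one matrix: rows and columns are vertices, 1-entries edges. -/
def cycleGraph {r s : ℕ} (A : Fin r → Fin s → Bool) : SimpleGraph (Fin r ⊕ Fin s) where
  Adj x y :=
    (∃ i j, x = Sum.inl i ∧ y = Sum.inr j ∧ A i j = true) ∨
    (∃ i j, x = Sum.inr j ∧ y = Sum.inl i ∧ A i j = true)
  symm := by
    constructor
    intro x y h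
    rcases h with ⟨i, j, hx, hy, hA⟩ | ⟨i, j, hx, hy, hA⟩
    · exact Or.inr ⟨i, j, hy, hx, hA⟩
    · exact Or.inl ⟨i, j, hy, hx, hA⟩
  loopless := by
    constructor
    intro x h
    rcases h with ⟨i, j, hx, hy, _⟩ | ⟨i, j, hx, hy, _⟩ <;> subst hx <;> simp_all

/-- `A` is a cycle: every row and column has 0 or 2 one-entries, and the edges of the
associated bipartite graph form a single connected cycle (the graph induced on the
support of `cycleGraph A` is connected). -/
def IsCycleMatrix {r s : ℕ} (A : Fin r → Fin s → Bool) : Prop :=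
  (∀ i : Fin r, (univ.filter fun j => A i j = true).card = 0 ∨
      (univ.filter fun j => A i j = true).card = 2) ∧
  (∀ j : Fin s, (univ.filter fun i => A i j = true).card = 0 ∨
      (univ.filter fun i => A i j = true).card = 2) ∧
  ((cycleGraph A).induce (cycleGraph A).support).Connected

/-- A cycle is x-monotone: every vertical line crosses at most two rows, i.e. for every `j`,
at most two rows have 1-entries in columns `c₁ ≤ j < c₂`. -/
def XMonotone {r s : ℕ} (A : Fin r → Fin s → Bool) : Prop :=
  ∀ j : ℕ, (univ.filter fun i : Fin r =>
    ∃ c₁ c₂ : Fin s, A i c₁ = true ∧ A i c₂ = true ∧ (c₁ : ℕ) ≤ j ∧ j < (c₂ : ℕ)).card ≤ 2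

/-! Count copies of `K_{u,1}` in two ways. By columns there are `∑_j C(d_j, u)` of them, where
the column degrees `d_j` sum to `w(M)`; by `u`-sets `S` of rows, the copies of `K_{u,t}` number
`∑_S C(c_S, t)`, where `c_S` is the number of columns that are all ones on `S` and the `c_S` sum to
the number of copies of `K_{u,1}`. Jensen's inequality for the convex extension of `x ↦ C(x, k)`
gives `(∑ p)^k ≤ k^k N^(k-1) ∑ C(p, k)` for `N` numbers `p` of average at least `k`, and the weight
hypothesis makes both averages large enough. Chaining the two bounds, with `u C(n, u) ≤ n^u`,
yields the estimate. -/

theorem div_pow_mul_factorial_le_descPochhammer_eval {k : ℕ} {x : ℝ} (hx : (k : ℝ) ≤ x) :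
    (x / k) ^ k * k.factorial ≤ (descPochhammer ℝ k).eval x := by
  rcases k.eq_zero_or_pos with rfl | hk
  · simp
  have hk' : (0 : ℝ) < k := by exact_mod_cast hk
  have hc : 1 ≤ x / k := (one_le_div hk').2 hx
  rw [← Nat.descFactorial_self, ← descPochhammer_eval_eq_descFactorial,
    descPochhammer_eval_eq_prod_range, descPochhammer_eval_eq_prod_range,
    ← Finset.card_range k, ← prod_const, card_range, ← prod_mul_distrib]
  -- factorwise, `(x / k) * (k - i) ≤ x - i` because `x / k ≥ 1`
  refine prod_le_prod (fun i hi => ?_) (fun i hi => ?_)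
  · have : (i : ℝ) < k := by exact_mod_cast mem_range.1 hi
    have : 0 ≤ x / k := zero_le_one.trans hc
    nlinarith
  · have : x / k * k = x := div_mul_cancel₀ x hk'.ne'
    have : (0 : ℝ) ≤ i := i.cast_nonneg
    nlinarith

theorem pow_sum_le_mul_sum_choose {ι : Type*} (s : Finset ι) (p : ι → ℕ) {k : ℕ} (hk : 0 < k)
    (hs : k * #s ≤ ∑ i ∈ s, p i) :
    (∑ i ∈ s, p i) ^ k ≤ k ^ k * #s ^ (k - 1) * ∑ i ∈ s, (p i).choose k := by
  rcases s.eq_empty_or_nonempty with rfl | hne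
  · simp [hk.ne']
  have hN : (0 : ℝ) < #s := by exact_mod_cast hne.card_pos
  have hmean : ∑ i ∈ s, (#s : ℝ)⁻¹ * p i = (∑ i ∈ s, (p i : ℝ)) / #s := by
    rw [← mul_sum, inv_mul_eq_div]
  have havg : (k : ℝ) ≤ (∑ i ∈ s, (p i : ℝ)) / #s := by
    rw [le_div_iff₀ hN]; exact_mod_cast hs
  have hjensen := descPochhammer_eval_div_factorial_le_sum_choose hk.ne' p (fun _ => (#s : ℝ)⁻¹)
    (fun _ _ => by positivity) (by simp [hN.ne']) (by rw [hmean]; linarith)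
  rw [hmean, ← mul_sum, inv_mul_eq_div,
    div_le_iff₀ (by positivity : (0 : ℝ) < k.factorial)] at hjensen
  have hmean_pow : ((∑ i ∈ s, (p i : ℝ)) / #s / k) ^ k ≤ (∑ i ∈ s, ((p i).choose k : ℝ)) / #s :=
    le_of_mul_le_mul_right ((div_pow_mul_factorial_le_descPochhammer_eval havg).trans
      (by simpa [div_mul_eq_mul_div] using hjensen)) (by positivity)
  have hreal : (∑ i ∈ s, (p i : ℝ)) ^ k ≤
      k ^ k * (#s : ℝ) ^ (k - 1) * ∑ i ∈ s, ((p i).choose k : ℝ) :=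
    calc (∑ i ∈ s, (p i : ℝ)) ^ k = ((∑ i ∈ s, (p i : ℝ)) / #s / k) ^ k * (#s * k) ^ k := by
          rw [← mul_pow, div_div, div_mul_cancel₀ _ (by positivity)]
      _ ≤ (∑ i ∈ s, ((p i).choose k : ℝ)) / #s * (#s * k) ^ k := by gcongr
      _ = k ^ k * (#s : ℝ) ^ (k - 1) * ∑ i ∈ s, ((p i).choose k : ℝ) := by
          rw [mul_pow, ← pow_sub_one_mul hk.ne']
          field_simp
  exact_mod_cast hreal

section Counting

variable {m n : ℕ} (M : Fin m → Fin n → Bool)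

def colSupport (j : Fin n) : Finset (Fin m) := {i | M i j = true}

def commonCols (S : Finset (Fin m)) : Finset (Fin n) := {j | ∀ i ∈ S, M i j = true}

theorem weight_eq_sum_card_colSupport : weight M = ∑ j, #(colSupport M j) := by
  simp only [weight, colSupport, card_filter, ← univ_product_univ, sum_product]
  exact sum_comm

theorem numCopies_eq_sum_choose_card_commonCols (u t : ℕ) :
    numCopies u t M =
      ∑ S ∈ (univ : Finset (Fin m)).powersetCard u, (#(commonCols M S)).choose t := by
  rw [numCopies, card_filter, sum_product]
  refine sum_congr rfl fun S _ => ?_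
  rw [← card_filter, ← card_powersetCard]
  congr 1
  ext T
  simp only [mem_filter, mem_powersetCard, commonCols, subset_iff, mem_univ, true_and]
  grind

theorem numCopies_one_eq_sum_choose_card_colSupport (u : ℕ) :
    numCopies u 1 M = ∑ j, (#(colSupport M j)).choose u := by
  simp only [numCopies_eq_sum_choose_card_commonCols, Nat.choose_one_right, commonCols,
    card_filter]
  rw [sum_comm]
  refine sum_congr rfl fun j _ => ?_
  rw [← card_filter, ← card_powersetCard]
  congr 1
  ext S
  simp only [mem_filter, mem_powersetCard, colSupport, subset_iff, mem_univ, true_and]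
  grind

theorem weight_pow_le_mul_numCopies_one {u : ℕ} (hu : 0 < u) (hw : u * n ≤ weight M) :
    weight M ^ u ≤ u ^ u * n ^ (u - 1) * numCopies u 1 M := by
  rw [weight_eq_sum_card_colSupport] at hw ⊢
  simpa [numCopies_one_eq_sum_choose_card_colSupport] using
    pow_sum_le_mul_sum_choose univ (fun j => #(colSupport M j)) hu (by simpa using hw)

theorem numCopies_one_pow_le_mul_numCopies {u t : ℕ} (ht : 0 < t)
    (hX : t * m.choose u ≤ numCopies u 1 M) :
    numCopies u 1 M ^ t ≤ t ^ t * m.choose u ^ (t - 1) * numCopies u t M := by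
  have hX_eq :
      numCopies u 1 M = ∑ S ∈ (univ : Finset (Fin m)).powersetCard u, #(commonCols M S) := by
    simp [numCopies_eq_sum_choose_card_commonCols]
  rw [hX_eq] at hX ⊢
  simpa [← numCopies_eq_sum_choose_card_commonCols] using
    pow_sum_le_mul_sum_choose (univ.powersetCard u) (fun S => #(commonCols M S)) ht
      (by simpa using hX)

end Counting

theorem choose_mul_le_pow (n u : ℕ) : n.choose u * u ≤ n ^ u :=
  calc n.choose u * u ≤ n.choose u * u.factorial := Nat.mul_le_mul_left _ u.self_le_factorial
    _ = n.descFactorial u := by rw [Nat.descFactorial_eq_factorial_mul_choose, mul_comm]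
    _ ≤ n ^ u := n.descFactorial_le_pow u

theorem pow_mul_pow_mul_choose_pow_le {u t : ℕ} (hu : 0 < u) (ht : 0 < t) (n : ℕ) :
    u ^ (u * t) * n ^ ((u - 1) * t) * n.choose u ^ (t - 1) ≤
      u ^ (u * t - t + u) * n ^ (2 * u * t - u - t) := by
  have htu : t ≤ u * t := Nat.le_mul_of_pos_left t hu
  have hut : u ≤ u * t := Nat.le_mul_of_pos_right u ht
  calc u ^ (u * t) * n ^ ((u - 1) * t) * n.choose u ^ (t - 1)
      = u ^ (u * t - t + 1) * n ^ ((u - 1) * t) * (n.choose u * u) ^ (t - 1) := by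
        conv_lhs => rw [show u * t = u * t - t + 1 + (t - 1) by omega, pow_add]
        ring
    _ ≤ u ^ (u * t - t + u) * n ^ ((u - 1) * t) * (n ^ u) ^ (t - 1) := by
        gcongr
        · omega
        · exact choose_mul_le_pow n u
    _ = u ^ (u * t - t + u) * n ^ (2 * u * t - u - t) := by
        rw [← pow_mul, mul_assoc, ← pow_add]
        congr 2
        rw [Nat.sub_one_mul, Nat.mul_sub_one, mul_assoc, two_mul]
        omega

theorem weight_pow_le_mul_numCopies {u t n : ℕ} (hu : 0 < u) (ht : 0 < t)
    (M : Fin n → Fin n → Bool) (hw : t ^ u * u ^ u * n ^ (2 * u - 1) < weight M ^ u) :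
    weight M ^ (u * t) ≤
      u ^ (u * t - t + u) * t ^ t * n ^ (2 * u * t - u - t) * numCopies u t M := by
  set W := weight M
  set X := numCopies u 1 M
  have hnu : n ^ u ≤ n ^ (2 * u - 1) := by
    rcases n.eq_zero_or_pos with rfl | hn
    · simp [hu.ne']
    · exact Nat.pow_le_pow_right hn (by omega)
  have hrows : u * n ≤ W := by
    refine (Nat.pow_lt_pow_iff_left hu.ne').1 (lt_of_le_of_lt ?_ hw) |>.le
    calc (u * n) ^ u = 1 * u ^ u * n ^ u := by ring
      _ ≤ t ^ u * u ^ u * n ^ (2 * u - 1) := by gcongr; exact Nat.one_le_pow _ _ ht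
  have hX := weight_pow_le_mul_numCopies_one M hu hrows
  have hcols : t * n.choose u ≤ X := by
    refine (Nat.lt_of_mul_lt_mul_right (a := u ^ u * n ^ (u - 1)) ?_).le
    calc t * n.choose u * (u ^ u * n ^ (u - 1)) ≤ t * n ^ u * (u ^ u * n ^ (u - 1)) := by
          gcongr; exact Nat.choose_le_pow n u
      _ = t * u ^ u * n ^ (2 * u - 1) := by
          rw [show 2 * u - 1 = u + (u - 1) by omega, pow_add]; ring
      _ ≤ t ^ u * u ^ u * n ^ (2 * u - 1) := by gcongr; exact Nat.le_self_pow hu.ne' t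
      _ < W ^ u := hw
      _ ≤ X * (u ^ u * n ^ (u - 1)) := by rw [mul_comm X]; exact hX
  calc W ^ (u * t) = (W ^ u) ^ t := pow_mul W u t
    _ ≤ (u ^ u * n ^ (u - 1) * X) ^ t := by gcongr
    _ = u ^ (u * t) * n ^ ((u - 1) * t) * X ^ t := by rw [mul_pow, mul_pow, ← pow_mul, ← pow_mul]
    _ ≤ u ^ (u * t) * n ^ ((u - 1) * t) * (t ^ t * n.choose u ^ (t - 1) * numCopies u t M) := by
        gcongr; exact numCopies_one_pow_le_mul_numCopies M ht hcols
    _ = u ^ (u * t) * n ^ ((u - 1) * t) * n.choose u ^ (t - 1) * (t ^ t * numCopies u t M) := by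
        ring
    _ ≤ u ^ (u * t - t + u) * n ^ (2 * u * t - u - t) * (t ^ t * numCopies u t M) :=
        Nat.mul_le_mul_right _ (pow_mul_pow_mul_choose_pow_le hu ht n)
    _ = u ^ (u * t - t + u) * t ^ t * n ^ (2 * u * t - u - t) * numCopies u t M := by ring

theorem rpow_two_sub_inv_pow {x : ℝ} (hx : 0 ≤ x) {u : ℕ} (hu : 0 < u) :
    (x ^ ((2 : ℝ) - 1 / (u : ℝ))) ^ u = x ^ (2 * u - 1) := by
  have hu' : (u : ℝ) ≠ 0 := by exact_mod_cast hu.ne'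
  rw [← Real.rpow_natCast, ← Real.rpow_mul hx, ← Real.rpow_natCast, Nat.cast_sub (by omega)]
  congr 1
  field_simp
  push_cast
  ring

theorem stmt3 {u t n : ℕ} (hu : 0 < u) (ht : 0 < t) (M : Fin n → Fin n → Bool)
    (hw : (t : ℝ) * (u : ℝ) * (n : ℝ) ^ ((2 : ℝ) - 1 / (u : ℝ)) < (weight M : ℝ)) :
    1 / ((u : ℝ) ^ (u * t - t + u) * (t : ℝ) ^ t) * (weight M : ℝ) ^ (t * u) /
        (n : ℝ) ^ (2 * u * t - u - t) ≤ (numCopies u t M : ℝ) := by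
  have hw_pow := pow_lt_pow_left₀ hw (by positivity) hu.ne'
  rw [mul_pow, mul_pow, rpow_two_sub_inv_pow n.cast_nonneg hu] at hw_pow
  have key := weight_pow_le_mul_numCopies hu ht M (by exact_mod_cast hw_pow)
  rw [one_div_mul_eq_div, mul_comm t u]
  refine div_le_of_le_mul₀ (by positivity) (by positivity)
    (div_le_of_le_mul₀ (by positivity) (by positivity) ?_)
  calc (weight M : ℝ) ^ (u * t)
      ≤ (u : ℝ) ^ (u * t - t + u) * t ^ t * n ^ (2 * u * t - u - t) * numCopies u t M := by
        exact_mod_cast key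
    _ = _ := by ring
end

section
/- Let t ≥ 2 and s ≥ 1 be integers and let H be a t-uniform hypergraph on the vertex set {1,2,...,n} with the following property: there do not exist pairwise disjoint sets V₁, V₂, ..., V_t ⊆ {1,...,n}, each of size s, with every element of V_i smaller than every element of V_j whenever i < j, such that every transversal set {v₁,...,v_t} with v_i ∈ V_i for each i is a hyperedge of H. Then H has at most 2·n^{t-δ} hyperedges, where δ = 1/(t·s^{t-1}). -/
open Finset

open scoped Nat

/-!
Induction on `t`. Write each edge of an `(r+1)`-uniform `H` as `T ∪ {v}` with `v` above the
`r`-set `T`, and let `d(T)` count such `v`. For an `s`-set `S`, the `r`-sets `T` whose extensions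
contain `S` form an `r`-uniform hypergraph without an ordered box (appending `S` as a last part
would give one in `H`), so the induction hypothesis bounds it. Double counting gives
`∑_T C(d(T), s) ≤ C(n, s) · max_S |link S|`, and a threshold `D` on `d(T)` turns this into
`|H| ≤ n^r (s - 1 + D) + n^s max_S |link S| / D^(s-1)`. With `y = n^(1/(r(r+1)s^r))` and
`D = 2n/y^(r+1)` this is at most `2 n^(r+1)/y^r` once `y ≥ 2`; for `y ≤ 2` the trivial bound
`(r+1)! |H| ≤ n^(r+1)` suffices. For `s = 1` a single edge is already a box, so `H` is empty.
-/

section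

variable {n : ℕ}

def HasOrderedBox (s t : ℕ) (H : Finset (Finset (Fin n))) : Prop :=
  ∃ V : Fin t → Finset (Fin n),
    (∀ i, (V i).card = s) ∧
    (∀ i j : Fin t, i ≠ j → Disjoint (V i) (V j)) ∧
    (∀ i j : Fin t, i < j → ∀ x ∈ V i, ∀ y ∈ V j, x < y) ∧
    (∀ v : Fin t → Fin n, (∀ i, v i ∈ V i) → Finset.image v Finset.univ ∈ H)

lemma hasOrderedBox_of_lt {s t : ℕ} {H : Finset (Finset (Fin n))} (V : Fin t → Finset (Fin n))
    (hcard : ∀ i, (V i).card = s) (hlt : ∀ i j : Fin t, i < j → ∀ x ∈ V i, ∀ y ∈ V j, x < y)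
    (hmem : ∀ v : Fin t → Fin n, (∀ i, v i ∈ V i) → Finset.image v Finset.univ ∈ H) :
    HasOrderedBox s t H := by
  refine ⟨V, hcard, fun i j hij => ?_, hlt, hmem⟩
  rcases hij.lt_or_gt with h | h
  · exact disjoint_left.2 fun x hi hj => (hlt i j h x hi x hj).false
  · exact disjoint_left.2 fun x hi hj => (hlt j i h x hj x hi).false

lemma hasOrderedBox_one_of_mem {t : ℕ} {H : Finset (Finset (Fin n))} {e : Finset (Fin n)}
    (he : e ∈ H) (hcard : e.card = t) : HasOrderedBox 1 t H := by
  refine hasOrderedBox_of_lt (fun i => {e.orderEmbOfFin hcard i}) (fun _ => card_singleton _)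
    ?_ fun v hv => ?_
  · simp only [mem_singleton]
    rintro i j hij x rfl y rfl
    exact (e.orderEmbOfFin hcard).strictMono hij
  · have : v = e.orderEmbOfFin hcard := funext fun i => mem_singleton.1 (hv i)
    rwa [this, image_orderEmbOfFin_univ]

lemma card_lt_of_not_hasOrderedBox_one {s : ℕ} {H : Finset (Finset (Fin n))}
    (hu : ∀ e ∈ H, e.card = 1) (hb : ¬ HasOrderedBox s 1 H) : H.card < s := by
  set W := univ.filter fun x : Fin n => {x} ∈ H
  have hHW : H = W.map ⟨singleton, singleton_injective⟩ := by
    ext e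
    simp only [W, mem_map, mem_filter, mem_univ, true_and, Function.Embedding.coeFn_mk]
    refine ⟨fun he => ?_, ?_⟩
    · obtain ⟨x, rfl⟩ := card_eq_one.1 (hu e he)
      exact ⟨x, he, rfl⟩
    · rintro ⟨x, hx, rfl⟩
      exact hx
  by_contra! hs
  rw [hHW, card_map] at hs
  obtain ⟨V, hVW, hV⟩ := exists_subset_card_eq hs
  refine hb (hasOrderedBox_of_lt (fun _ => V) (fun _ => hV) (fun i j hij => ?_) fun v hv => ?_)
  · exact absurd hij (Subsingleton.elim i j).not_lt
  · have : image v univ = {v 0} := by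
      ext x
      simp
    rw [this]
    exact (mem_filter.1 (hVW (hv 0))).2

def topExtensions (H : Finset (Finset (Fin n))) (T : Finset (Fin n)) : Finset (Fin n) :=
  univ.filter fun v => (∀ u ∈ T, u < v) ∧ insert v T ∈ H

def link (H : Finset (Finset (Fin n))) (r : ℕ) (S : Finset (Fin n)) :
    Finset (Finset (Fin n)) :=
  (powersetCard r univ).filter fun T => S ⊆ topExtensions H T

lemma card_of_mem_link {H : Finset (Finset (Fin n))} {r : ℕ} {S T : Finset (Fin n)}
    (hT : T ∈ link H r S) : T.card = r :=
  (mem_powersetCard.1 (mem_filter.1 hT).1).2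

lemma image_univ_eq_insert_image_init {α : Type*} [DecidableEq α] {r : ℕ}
    (v : Fin (r + 1) → α) :
    image v univ = insert (v (Fin.last r)) (image (Fin.init v) univ) := by
  rw [Fin.univ_castSuccEmb, cons_eq_insert, image_insert, map_eq_image, image_image]
  rfl

lemma not_hasOrderedBox_link {s r : ℕ} {H : Finset (Finset (Fin n))} {S : Finset (Fin n)}
    (hS : S.card = s) (hb : ¬ HasOrderedBox s (r + 1) H) :
    ¬ HasOrderedBox s r (link H r S) := by
  rintro ⟨V, hVcard, -, hVlt, hVmem⟩
  have hext : ∀ w : Fin r → Fin n, (∀ i, w i ∈ V i) →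
      S ⊆ topExtensions H (image w univ) :=
    fun w hw => (mem_filter.1 (hVmem w hw)).2
  have hbelow : ∀ i, ∀ x ∈ V i, ∀ y ∈ S, x < y := by
    intro i x hx y hy
    have hne : ∀ j, (V j).Nonempty := fun j =>
      card_pos.1 (by rw [hVcard, ← hS]; exact card_pos.2 ⟨y, hy⟩)
    let w := Function.update (fun j => (hne j).choose) i x
    have hw : ∀ j, w j ∈ V j := by
      intro j
      rcases eq_or_ne j i with rfl | hji
      · simpa [w] using hx
      · simpa [w, Function.update_of_ne hji] using (hne j).choose_spec
    exact (mem_filter.1 (hext w hw hy)).2.1 x (mem_image.2 ⟨i, mem_univ _, by simp [w]⟩)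
  refine hb (hasOrderedBox_of_lt (Fin.snoc V S) (Fin.lastCases (by simpa) (by simpa))
    (fun i j hij => ?_) fun v hv => ?_)
  · induction j using Fin.lastCases with
    | last =>
      obtain ⟨i, rfl⟩ := Fin.exists_castSucc_eq.2 hij.ne
      simpa using hbelow i
    | cast j =>
      obtain ⟨i, rfl⟩ := Fin.exists_castSucc_eq.2 (hij.trans (Fin.castSucc_lt_last j)).ne
      simpa using hVlt i j (by simpa using hij)
  · have hinit : ∀ i, Fin.init v i ∈ V i := fun i => by simpa [Fin.init] using hv i.castSucc
    have hlast : v (Fin.last r) ∈ S := by simpa using hv (Fin.last r)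
    rw [image_univ_eq_insert_image_init]
    exact (mem_filter.1 (hext _ hinit hlast)).2.2

lemma card_eq_sum_card_topExtensions {r : ℕ} {H : Finset (Finset (Fin n))}
    (hu : ∀ e ∈ H, e.card = r + 1) :
    H.card = ∑ T ∈ powersetCard r univ, (topExtensions H T).card := by
  rw [← card_sigma]
  refine (card_bij (fun p _ => insert p.2 p.1) ?_ ?_ ?_).symm
  · rintro ⟨T, v⟩ hp
    exact (mem_filter.1 (mem_sigma.1 hp).2).2.2
  · rintro ⟨T, v⟩ hp ⟨T', v'⟩ hp' heq
    simp only [mem_sigma, topExtensions, mem_filter] at hp hp' heq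
    have hvT : v ∉ T := fun h => (hp.2.2.1 v h).false
    have hvT' : v' ∉ T' := fun h => (hp'.2.2.1 v' h).false
    obtain rfl : v = v' := by
      rcases mem_insert.1 (heq ▸ mem_insert_self v T) with h | h
      · exact h
      rcases mem_insert.1 (heq ▸ mem_insert_self v' T') with h' | h'
      · exact h'.symm
      · exact ((hp'.2.2.1 v h).trans (hp.2.2.1 v' h')).false.elim
    rw [← erase_insert hvT, ← erase_insert hvT', heq]
  · intro e he
    have hne : e.Nonempty := card_pos.1 (by rw [hu e he]; exact r.succ_pos)
    refine ⟨⟨e.erase (e.max' hne), e.max' hne⟩, ?_, insert_erase (e.max'_mem hne)⟩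
    simp only [mem_sigma, mem_powersetCard, subset_univ, true_and, topExtensions, mem_filter,
      mem_univ, insert_erase (e.max'_mem hne), he, and_true]
    refine ⟨by rw [card_erase_of_mem (e.max'_mem hne), hu e he]; rfl, fun u hu => ?_⟩
    exact lt_of_le_of_ne (e.le_max' u (mem_of_mem_erase hu)) (ne_of_mem_erase hu)

lemma sum_choose_card_topExtensions_eq_sum_card_link (r s : ℕ) (H : Finset (Finset (Fin n))) :
    ∑ T ∈ powersetCard r univ, (topExtensions H T).card.choose s
      = ∑ S ∈ powersetCard s univ, (link H r S).card := by
  have hchoose : ∀ T, (topExtensions H T).card.choose s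
      = ((powersetCard s univ).filter fun S => S ⊆ topExtensions H T).card := by
    intro T
    rw [← card_powersetCard]
    congr 1
    ext S
    simp [mem_powersetCard, and_comm]
  simp_rw [hchoose, card_filter, link]
  rw [sum_comm]
  exact sum_congr rfl fun S _ => (card_filter _ _).symm

lemma le_add_pow_succ_div_pow {e D : ℝ} (he : 0 ≤ e) (hD : 0 < D) (k : ℕ) :
    e ≤ D + e ^ (k + 1) / D ^ k := by
  rcases le_total e D with h | h
  · linarith [show 0 ≤ e ^ (k + 1) / D ^ k by positivity]
  · have : e ≤ e ^ (k + 1) / D ^ k := by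
      rw [le_div_iff₀ (by positivity), pow_succ']
      exact mul_le_mul_of_nonneg_left (pow_le_pow_left₀ hD.le h k) he
    linarith

lemma cast_le_add_factorial_mul_choose_div {s : ℕ} (hs : 1 ≤ s) (d : ℕ) {D : ℝ}
    (hD : 0 < D) :
    (d : ℝ) ≤ (s - 1 + D) + s ! * d.choose s / D ^ (s - 1) := by
  obtain ⟨k, rfl⟩ := Nat.exists_eq_add_of_le' hs
  have hpow : ((d - k : ℕ) : ℝ) ^ (k + 1) ≤ (k + 1)! * d.choose (k + 1) := by
    have := Nat.pow_le_choose (α := ℝ) (k + 1) d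
    rw [Nat.add_sub_add_right, div_le_iff₀ (by positivity)] at this
    linarith
  have hd : (d : ℝ) ≤ k + ((d - k : ℕ) : ℝ) := by norm_cast; omega
  calc (d : ℝ) ≤ k + ((d - k : ℕ) : ℝ) := hd
    _ ≤ k + (D + ((d - k : ℕ) : ℝ) ^ (k + 1) / D ^ k) := by
        gcongr; exact le_add_pow_succ_div_pow (Nat.cast_nonneg _) hD k
    _ ≤ ((k + 1 : ℕ) - 1 + D) + (k + 1)! * d.choose (k + 1) / D ^ (k + 1 - 1) := by
        push_cast; simp only [add_sub_cancel_right]; rw [← add_assoc]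
        gcongr

lemma factorial_mul_choose_le_pow (n k : ℕ) : k ! * n.choose k ≤ n ^ k :=
  (Nat.descFactorial_eq_factorial_mul_choose n k).symm.trans_le (Nat.descFactorial_le_pow n k)

theorem card_le_of_card_link_le {r s : ℕ} (hs : 1 ≤ s) {H : Finset (Finset (Fin n))}
    (hu : ∀ e ∈ H, e.card = r + 1) {D L : ℝ} (hD : 0 < D) (hL : 0 ≤ L)
    (hlink : ∀ S ∈ powersetCard s univ, ((link H r S).card : ℝ) ≤ L) :
    (H.card : ℝ) ≤ n ^ r * (s - 1 + D) + n ^ s * L / D ^ (s - 1) := by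
  have hlinks : ∑ S ∈ powersetCard s univ, ((link H r S).card : ℝ) ≤ n.choose s * L := by
    simpa using sum_le_sum hlink
  have hchoose : (s ! * n.choose s : ℝ) ≤ n ^ s := by
    exact_mod_cast factorial_mul_choose_le_pow n s
  calc (H.card : ℝ) = ∑ T ∈ powersetCard r univ, ((topExtensions H T).card : ℝ) := by
        rw [card_eq_sum_card_topExtensions hu]; push_cast; rfl
    _ ≤ ∑ T ∈ powersetCard r univ,
          ((s - 1 + D) + s ! * (topExtensions H T).card.choose s / D ^ (s - 1)) :=
        sum_le_sum fun T _ => cast_le_add_factorial_mul_choose_div hs _ hD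
    _ = n.choose r * (s - 1 + D) + s ! / D ^ (s - 1) *
          ∑ S ∈ powersetCard s univ, ((link H r S).card : ℝ) := by
        rw [sum_add_distrib, sum_const, card_powersetCard, card_univ, Fintype.card_fin,
          nsmul_eq_mul, ← Nat.cast_sum, ← sum_choose_card_topExtensions_eq_sum_card_link,
          Nat.cast_sum, mul_sum]
        congr 1
        exact sum_congr rfl fun T _ => by ring
    _ ≤ n ^ r * (s - 1 + D) + s ! / D ^ (s - 1) * (n.choose s * L) := by
        have hsD : (0 : ℝ) ≤ s - 1 + D := by
          have : (1 : ℝ) ≤ s := by exact_mod_cast hs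
          linarith
        have hnr : (n.choose r : ℝ) ≤ n ^ r := by exact_mod_cast Nat.choose_le_pow n r
        gcongr
    _ = n ^ r * (s - 1 + D) + s ! * n.choose s * L / D ^ (s - 1) := by ring
    _ ≤ n ^ r * (s - 1 + D) + n ^ s * L / D ^ (s - 1) := by gcongr

lemma factorial_mul_card_le_pow {t : ℕ} {H : Finset (Finset (Fin n))}
    (hu : ∀ e ∈ H, e.card = t) : (t ! * H.card : ℝ) ≤ n ^ t := by
  have hH : H.card ≤ n.choose t := by
    simpa using card_le_card fun e he => mem_powersetCard.2 ⟨subset_univ e, hu e he⟩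
  exact_mod_cast (Nat.mul_le_mul_left _ hH).trans (factorial_mul_choose_le_pow n t)

noncomputable def boxExponent (s t : ℕ) : ℝ := t - 1 / (t * (s : ℝ) ^ (t - 1))

noncomputable def boxGain (r s : ℕ) : ℝ := 1 / (r * (r + 1) * (s : ℝ) ^ r)

lemma boxExponent_add_mul_boxGain {r s : ℕ} (hr : 1 ≤ r) (hs : 1 ≤ s) :
    boxExponent s r + ((r + 1) * s : ℕ) * boxGain r s = r := by
  obtain ⟨r', rfl⟩ := Nat.exists_eq_add_of_le' hr
  have : (s : ℝ) ≠ 0 := by positivity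
  simp only [boxExponent, boxGain]
  push_cast
  field_simp
  ring

lemma boxExponent_succ_add_mul_boxGain {r s : ℕ} (hr : 1 ≤ r) (hs : 1 ≤ s) :
    boxExponent s (r + 1) + (r : ℕ) * boxGain r s = (r + 1 : ℕ) := by
  have : (r : ℝ) ≠ 0 := by positivity
  have : (s : ℝ) ≠ 0 := by positivity
  simp only [boxExponent, boxGain]
  push_cast
  field_simp
  ring

lemma rpow_mul_rpow_pow_eq_pow {x e u : ℝ} (hx : 0 ≤ x) {k m : ℕ} (h : e + k * u = m)
    (hm : m ≠ 0) : x ^ e * (x ^ u) ^ k = x ^ m := by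
  rw [← Real.rpow_mul_natCast hx, ← Real.rpow_add' hx (by rw [mul_comm, h]; exact_mod_cast hm),
    mul_comm u, h, Real.rpow_natCast]

lemma sub_one_mul_rpow_boxGain_pow_le {r s : ℕ} (hr : 1 ≤ r) (hs : 1 ≤ s) {x : ℝ}
    (hx : 1 ≤ x) (hy : 2 ≤ x ^ boxGain r s) : (s - 1) * (x ^ boxGain r s) ^ (r + 1) ≤ x := by
  set y := x ^ boxGain r s
  have hsy : (s - 1 : ℝ) ≤ y ^ ((r + 1) * (s - 1)) := by
    calc (s - 1 : ℝ) = (s - 1 : ℕ) := by push_cast [hs]; ring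
      _ ≤ 2 ^ (s - 1) := by exact_mod_cast Nat.lt_two_pow_self.le
      _ ≤ y ^ (s - 1) := by gcongr
      _ ≤ y ^ ((r + 1) * (s - 1)) :=
          pow_le_pow_right₀ (by linarith) (Nat.le_mul_of_pos_left _ (by omega))
  have hexp : ((r + 1) * s : ℕ) * boxGain r s ≤ 1 := by
    have : (r + 1) * s ≤ r * (r + 1) * s ^ r :=
      calc (r + 1) * s ≤ r * ((r + 1) * s ^ r) :=
            (Nat.le_mul_of_pos_left _ hr).trans'
              (Nat.mul_le_mul_left _ (Nat.le_self_pow (by omega) _))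
        _ = r * (r + 1) * s ^ r := by ring
    rw [boxGain, mul_one_div, div_le_one (by positivity)]
    exact_mod_cast this
  calc (s - 1) * y ^ (r + 1) ≤ y ^ ((r + 1) * (s - 1)) * y ^ (r + 1) := by gcongr
    _ = y ^ ((r + 1) * s) := by rw [← pow_add, ← mul_add_one, Nat.sub_add_cancel hs]
    _ = x ^ (((r + 1) * s : ℕ) * boxGain r s) := by
        rw [← Real.rpow_mul_natCast (by linarith), mul_comm]
    _ ≤ x ^ (1 : ℝ) := Real.rpow_le_rpow_of_exponent_le hx hexp
    _ = x := Real.rpow_one x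

lemma card_le_rpow_boxExponent_succ_of_rpow_boxGain_le_two {r s : ℕ} (hr : 1 ≤ r) (hs : 1 ≤ s)
    {H : Finset (Finset (Fin n))} (hu : ∀ e ∈ H, e.card = r + 1)
    (hy : (n : ℝ) ^ boxGain r s ≤ 2) : (H.card : ℝ) ≤ n ^ boxExponent s (r + 1) := by
  have hfact : (2 : ℝ) ^ r ≤ (r + 1)! := by
    have := Nat.factorial_mul_pow_le_factorial (m := 1) (n := r)
    rw [Nat.factorial_one, one_mul, Nat.add_comm 1 r] at this
    exact_mod_cast this
  refine le_of_mul_le_mul_left ?_ (by positivity : (0 : ℝ) < (r + 1)!)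
  calc ((r + 1)! * H.card : ℝ) ≤ n ^ (r + 1) := factorial_mul_card_le_pow hu
    _ = n ^ boxExponent s (r + 1) * (n ^ boxGain r s) ^ r :=
        (rpow_mul_rpow_pow_eq_pow n.cast_nonneg (boxExponent_succ_add_mul_boxGain hr hs)
          (by omega)).symm
    _ ≤ n ^ boxExponent s (r + 1) * 2 ^ r := by gcongr
    _ ≤ (r + 1)! * n ^ boxExponent s (r + 1) := by rw [mul_comm]; gcongr

lemma card_le_two_mul_rpow_boxExponent_succ_of_two_le_rpow_boxGain {r s : ℕ} (hr : 1 ≤ r)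
    (hs : 1 ≤ s) {H : Finset (Finset (Fin n))} (hu : ∀ e ∈ H, e.card = r + 1)
    (hlink : ∀ S ∈ powersetCard s univ,
      ((link H r S).card : ℝ) ≤ s * (n : ℝ) ^ boxExponent s r)
    (hy : 2 ≤ (n : ℝ) ^ boxGain r s) :
    (H.card : ℝ) ≤ 2 * (n : ℝ) ^ boxExponent s (r + 1) := by
  set y := (n : ℝ) ^ boxGain r s
  have hn : (1 : ℝ) ≤ n := by
    have : 0 < boxGain r s := by
      have : (0 : ℝ) < r := by exact_mod_cast hr
      unfold boxGain; positivity
    by_contra! h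
    linarith [Real.rpow_lt_one n.cast_nonneg h this]
  have hny := sub_one_mul_rpow_boxGain_pow_le hr hs hn hy
  have hP : (n : ℝ) ^ boxExponent s r = n ^ r / y ^ ((r + 1) * s) :=
    eq_div_of_mul_eq (by positivity)
      (rpow_mul_rpow_pow_eq_pow n.cast_nonneg (boxExponent_add_mul_boxGain hr hs) (by omega))
  have hQ : (n : ℝ) ^ boxExponent s (r + 1) = n ^ (r + 1) / y ^ r :=
    eq_div_of_mul_eq (by positivity)
      (rpow_mul_rpow_pow_eq_pow n.cast_nonneg (boxExponent_succ_add_mul_boxGain hr hs) (by omega))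
  -- The threshold `D` makes both terms of `card_le_of_card_link_le` of order `n^(r+1)/y^(r+1)`.
  set Z : ℝ := n ^ (r + 1) / y ^ (r + 1)
  have hD : (0 : ℝ) < 2 * n / y ^ (r + 1) := by positivity
  refine (card_le_of_card_link_le hs hu hD (by positivity) hlink).trans ?_
  obtain ⟨k, rfl⟩ := Nat.exists_eq_add_of_le' hs
  have hfirst : (n : ℝ) ^ r * ((k + 1 : ℕ) - 1 + 2 * n / y ^ (r + 1)) ≤ 3 * Z := by
    have : (n : ℝ) ^ r * k ≤ Z := by
      rw [le_div_iff₀ (by positivity), mul_assoc, pow_succ (n : ℝ)]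
      push_cast at hny
      gcongr
      linarith
    push_cast
    linarith [show (n : ℝ) ^ r * (2 * n / y ^ (r + 1)) = 2 * Z by simp only [Z]; ring]
  have hsecond : (n : ℝ) ^ (k + 1) * ((k + 1 : ℕ) * n ^ boxExponent (k + 1) r) /
      (2 * n / y ^ (r + 1)) ^ (k + 1 - 1) ≤ Z := by
    have hk : (k + 1 : ℝ) ≤ 2 ^ k := by exact_mod_cast Nat.lt_two_pow_self
    calc (n : ℝ) ^ (k + 1) * ((k + 1 : ℕ) * n ^ boxExponent (k + 1) r) /
          (2 * n / y ^ (r + 1)) ^ (k + 1 - 1)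
        = (k + 1) / 2 ^ k * Z := by
          rw [hP, Nat.add_sub_cancel, mul_add_one, pow_add, div_pow, mul_pow, ← pow_mul]
          simp only [Z]
          field_simp
          push_cast
          ring
      _ ≤ Z := by
          refine mul_le_of_le_one_left (by positivity) ?_
          rwa [div_le_one (by positivity)]
  have hthird : 4 * Z ≤ 2 * n ^ boxExponent (k + 1) (r + 1) := by
    rw [hQ, show (n : ℝ) ^ (r + 1) / y ^ r = y * Z by simp only [Z]; field_simp; ring]
    nlinarith [show 0 ≤ Z by positivity]
  linarith

theorem card_le_two_mul_rpow_boxExponent_succ {r s : ℕ} (hr : 1 ≤ r) (hs : 1 ≤ s)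
    {H : Finset (Finset (Fin n))} (hu : ∀ e ∈ H, e.card = r + 1)
    (hlink : ∀ S ∈ powersetCard s univ,
      ((link H r S).card : ℝ) ≤ s * (n : ℝ) ^ boxExponent s r) :
    (H.card : ℝ) ≤ 2 * (n : ℝ) ^ boxExponent s (r + 1) := by
  rcases le_total ((n : ℝ) ^ boxGain r s) 2 with hy | hy
  · have := card_le_rpow_boxExponent_succ_of_rpow_boxGain_le_two hr hs hu hy
    linarith [Real.rpow_nonneg n.cast_nonneg (boxExponent s (r + 1))]
  · exact card_le_two_mul_rpow_boxExponent_succ_of_two_le_rpow_boxGain hr hs hu hlink hy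

theorem card_le_two_mul_rpow_boxExponent {s t : ℕ} (hs : 2 ≤ s) (ht : 2 ≤ t)
    {H : Finset (Finset (Fin n))} (hu : ∀ e ∈ H, e.card = t) (hb : ¬ HasOrderedBox s t H) :
    (H.card : ℝ) ≤ 2 * (n : ℝ) ^ boxExponent s t := by
  induction t, ht using Nat.le_induction generalizing H with
  | base =>
    refine card_le_two_mul_rpow_boxExponent_succ le_rfl (by omega) hu fun S hS => ?_
    have := card_lt_of_not_hasOrderedBox_one (fun _ => card_of_mem_link)
      (not_hasOrderedBox_link (mem_powersetCard.1 hS).2 hb)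
    simp only [boxExponent]
    norm_num
    exact_mod_cast this.le
  | succ t ht ih =>
    refine card_le_two_mul_rpow_boxExponent_succ (by omega) (by omega) hu fun S hS => ?_
    calc _ ≤ 2 * (n : ℝ) ^ boxExponent s t := ih (fun _ => card_of_mem_link)
          (not_hasOrderedBox_link (mem_powersetCard.1 hS).2 hb)
      _ ≤ s * (n : ℝ) ^ boxExponent s t := by gcongr; exact_mod_cast hs

end

theorem stmt4 {t s n : ℕ} (ht : 2 ≤ t) (hs : 1 ≤ s)
    (H : Finset (Finset (Fin n))) (hunif : ∀ e ∈ H, e.card = t)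
    (hH : ¬ ∃ V : Fin t → Finset (Fin n),
      (∀ i, (V i).card = s) ∧
      (∀ i j : Fin t, i ≠ j → Disjoint (V i) (V j)) ∧
      (∀ i j : Fin t, i < j → ∀ x ∈ V i, ∀ y ∈ V j, x < y) ∧
      (∀ v : Fin t → Fin n, (∀ i, v i ∈ V i) → Finset.image v Finset.univ ∈ H)) :
    (H.card : ℝ) ≤ 2 * (n : ℝ) ^ ((t : ℝ) - 1 / ((t : ℝ) * (s : ℝ) ^ (t - 1))) := by
  rcases hs.eq_or_lt with rfl | hs
  · obtain rfl : H = ∅ := eq_empty_of_forall_notMem fun e he =>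
      hH (hasOrderedBox_one_of_mem he (hunif e he))
    simpa using Real.rpow_nonneg n.cast_nonneg _
  · exact card_le_two_mul_rpow_boxExponent hs ht hunif hH
end

section
/- Let r, n, m be positive integers with r dividing n, let u and v be integers with 1 ≤ u < v ≤ r, and let M be an n×m zero-one matrix that is r-balanced with w(M) > √m·n. Then there exist rows a and b of M with (u-1)n/r < a ≤ u·n/r and (v-1)n/r < b ≤ v·n/r, and columns c < c' of M, such that M(a,c) = M(b,c) = M(a,c') = M(b,c') = 1. -/
open Finset

theorem stmt11 (r n m : ℕ) (hr : 0 < r) (hn : 0 < n) (hm : 0 < m) (hrn : r ∣ n)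
    (u v : ℕ) (hu : 1 ≤ u) (huv : u < v) (hv : v ≤ r)
    (M : Fin n → Fin m → Bool) (hbal : RBalanced r M)
    (hw : Real.sqrt m * (n : ℝ) < (weight M : ℝ)) :
    ∃ a b : Fin n, ∃ c c' : Fin m,
      (u - 1) * (n / r) ≤ (a : ℕ) ∧ (a : ℕ) < u * (n / r) ∧
      (v - 1) * (n / r) ≤ (b : ℕ) ∧ (b : ℕ) < v * (n / r) ∧
      (c : ℕ) < (c' : ℕ) ∧
      M a c = true ∧ M b c = true ∧ M a c' = true ∧ M b c' = true := by
  set d := n / r with hd_def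
  have hnd : n = r * d := (Nat.mul_div_cancel' hrn).symm
  have hd : 0 < d := Nat.div_pos (Nat.le_of_dvd hn hrn) hr
  have hiu : u - 1 < r := by omega
  have hiv : v - 1 < r := by omega
  set iu : Fin r := ⟨u - 1, hiu⟩ with hiu_def
  set iv : Fin r := ⟨v - 1, hiv⟩ with hiv_def
  -- counts per interval
  set k : Fin m → Fin r → ℕ := fun c i =>
    (univ.filter fun a : Fin n =>
      (i : ℕ) * d ≤ (a : ℕ) ∧ (a : ℕ) < ((i : ℕ) + 1) * d ∧ M a c = true).card with hk_def
  set K : Fin m → ℕ := fun c => k c iu with hK_def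
  have hbal2 : ∀ (c : Fin m) (i : Fin r), k c i = K c := fun c i => hbal.2 c i iu
  -- column sums
  have hcol : ∀ c : Fin m, (univ.filter fun a : Fin n => M a c = true).card = r * K c := by
    intro c
    have hmap : ∀ a : Fin n, (a : ℕ) / d < r := by
      intro a
      have := a.2
      rw [Nat.div_lt_iff_lt_mul hd]
      omega
    have := Finset.card_eq_sum_card_fiberwise
      (f := fun a : Fin n => (⟨(a : ℕ) / d, hmap a⟩ : Fin r))
      (s := univ.filter fun a : Fin n => M a c = true) (t := univ) (fun a _ => mem_univ _)
    rw [this]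
    have heach : ∀ i : Fin r,
        ((univ.filter fun a : Fin n => M a c = true).filter
          fun a : Fin n => (⟨(a : ℕ) / d, hmap a⟩ : Fin r) = i).card = k c i := by
      intro i
      rw [Finset.filter_filter]
      have hset : (univ.filter fun a : Fin n =>
            M a c = true ∧ ((⟨(a : ℕ) / d, hmap a⟩ : Fin r) = i))
          = univ.filter fun a : Fin n =>
            (i : ℕ) * d ≤ (a : ℕ) ∧ (a : ℕ) < ((i : ℕ) + 1) * d ∧ M a c = true := by
        apply Finset.filter_congr
        intro a _
        rw [Fin.ext_iff]
        simp only
        constructor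
        · rintro ⟨hM, hdiv⟩
          have h1 : (i : ℕ) ≤ (a : ℕ) / d := by omega
          have h2 : (a : ℕ) / d < (i : ℕ) + 1 := by omega
          rw [Nat.le_div_iff_mul_le hd] at h1
          rw [Nat.div_lt_iff_lt_mul hd] at h2
          exact ⟨by omega, by omega, hM⟩
        · rintro ⟨h1, h2, hM⟩
          have h1' : (i : ℕ) ≤ (a : ℕ) / d := by rw [Nat.le_div_iff_mul_le hd]; omega
          have h2' : (a : ℕ) / d < (i : ℕ) + 1 := by rw [Nat.div_lt_iff_lt_mul hd]; omega
          exact ⟨hM, by omega⟩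
      rw [hset]
    calc ∑ i : Fin r, ((univ.filter fun a : Fin n => M a c = true).filter
          fun a : Fin n => (⟨(a : ℕ) / d, hmap a⟩ : Fin r) = i).card
        = ∑ i : Fin r, K c := by
          apply Finset.sum_congr rfl
          intro i _
          rw [heach i, hbal2 c i]
      _ = r * K c := by simp [mul_comm]
  -- weight = r * sum K
  have hwsum : weight M = r * ∑ c : Fin m, K c := by
    rw [weight]
    rw [Finset.card_filter]
    rw [Fintype.sum_prod_type]
    rw [Finset.sum_comm]
    rw [Finset.mul_sum]
    apply Finset.sum_congr rfl
    intro c _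
    rw [← hcol c, Finset.card_filter]
  -- key inequality: d^2 < ∑ K^2  (over ℕ)
  have hkey : d ^ 2 < ∑ c : Fin m, K c ^ 2 := by
    have h0 : (0 : ℝ) ≤ Real.sqrt m * n := by positivity
    have hsq : (m : ℝ) * (n : ℝ) ^ 2 < (weight M : ℝ) ^ 2 := by
      have := pow_lt_pow_left₀ hw h0 (n := 2) (by norm_num)
      calc (m : ℝ) * (n : ℝ) ^ 2 = (Real.sqrt m * n) ^ 2 := by
            rw [mul_pow, Real.sq_sqrt (by positivity)]
        _ < _ := this
    -- convert to ℕ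
    have hsqn : m * n ^ 2 < weight M ^ 2 := by
      have := hsq
      push_cast at this
      exact_mod_cast this
    rw [hwsum, hnd] at hsqn
    have h1 : m * d ^ 2 < (∑ c : Fin m, K c) ^ 2 := by
      have hr2 : 0 < r ^ 2 := by positivity
      nlinarith [hsqn]
    have h2 : (∑ c : Fin m, K c) ^ 2 ≤ m * ∑ c : Fin m, K c ^ 2 := by
      have := sq_sum_le_card_mul_sum_sq (s := (univ : Finset (Fin m)))
        (f := fun c => (K c : ℝ))
      have hcard : ((univ : Finset (Fin m)).card : ℝ) = (m : ℝ) := by simp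
      rw [hcard] at this
      exact_mod_cast (by push_cast; exact this :
        ((∑ c : Fin m, K c : ℕ) : ℝ) ^ 2 ≤ ((m * ∑ c : Fin m, K c ^ 2 : ℕ) : ℝ))
    have := lt_of_lt_of_le h1 h2
    exact lt_of_mul_lt_mul_left this (Nat.zero_le m)
  -- pigeonhole setup
  set Ru : Fin m → Finset (Fin n) := fun c => univ.filter fun a : Fin n =>
    (iu : ℕ) * d ≤ (a : ℕ) ∧ (a : ℕ) < ((iu : ℕ) + 1) * d ∧ M a c = true with hRu_def
  set Rv : Fin m → Finset (Fin n) := fun c => univ.filter fun a : Fin n =>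
    (iv : ℕ) * d ≤ (a : ℕ) ∧ (a : ℕ) < ((iv : ℕ) + 1) * d ∧ M a c = true with hRv_def
  have hRu_card : ∀ c, (Ru c).card = K c := fun c => rfl
  have hRv_card : ∀ c, (Rv c).card = K c := fun c => hbal2 c iv
  set S : Fin m → Finset (Fin n × Fin n) := fun c => (Ru c) ×ˢ (Rv c) with hS_def
  set E : Finset ((_ : Fin m) × (Fin n × Fin n)) := univ.sigma S with hE_def
  have hE_card : E.card = ∑ c : Fin m, K c ^ 2 := by
    rw [hE_def, Finset.card_sigma]
    apply Finset.sum_congr rfl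
    intro c _
    rw [hS_def]
    simp only [Finset.card_product, hRu_card, hRv_card]
    ring
  set T : Finset (Fin n × Fin n) :=
    (univ.filter fun a : Fin n => (iu : ℕ) * d ≤ (a : ℕ) ∧ (a : ℕ) < ((iu : ℕ) + 1) * d) ×ˢ
    (univ.filter fun a : Fin n => (iv : ℕ) * d ≤ (a : ℕ) ∧ (a : ℕ) < ((iv : ℕ) + 1) * d)
    with hT_def
  have hTle : T.card ≤ d ^ 2 := by
    have hgen : ∀ i : Fin r,
        (univ.filter fun a : Fin n =>
          (i : ℕ) * d ≤ (a : ℕ) ∧ (a : ℕ) < ((i : ℕ) + 1) * d).card ≤ d := by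
      intro i
      have : (univ.filter fun a : Fin n =>
          (i : ℕ) * d ≤ (a : ℕ) ∧ (a : ℕ) < ((i : ℕ) + 1) * d).card ≤ (Finset.range d).card := by
        refine Finset.card_le_card_of_injOn (fun a : Fin n => (a : ℕ) - (i : ℕ) * d) ?_ ?_
        · intro a ha
          simp only [Finset.mem_coe, Finset.mem_filter] at ha
          simp only [Finset.mem_coe, Finset.mem_range]
          have hexp : ((i : ℕ) + 1) * d = (i : ℕ) * d + d := by ring
          omega
        · intro a ha b hb hab
          simp only [Finset.mem_coe, Finset.mem_filter] at ha hb
          have hab' : (a : ℕ) - (i : ℕ) * d = (b : ℕ) - (i : ℕ) * d := hab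
          have hexp : ((i : ℕ) + 1) * d = (i : ℕ) * d + d := by ring
          exact Fin.ext (by omega)
      simpa using this
    rw [hT_def, Finset.card_product, pow_two]
    exact Nat.mul_le_mul (hgen iu) (hgen iv)
  have hlt : T.card < E.card := by omega
  have hmaps : ∀ x ∈ E, x.2 ∈ T := by
    rintro ⟨c, a, b⟩ hx
    rw [hE_def] at hx
    simp only [Finset.mem_sigma, Finset.mem_univ, true_and] at hx
    rw [hS_def] at hx
    simp only [Finset.mem_product, hRu_def, hRv_def, Finset.mem_filter, Finset.mem_univ,
      true_and] at hx
    rw [hT_def]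
    simp only [Finset.mem_product, Finset.mem_filter, Finset.mem_univ, true_and]
    exact ⟨⟨hx.1.1, hx.1.2.1⟩, ⟨hx.2.1, hx.2.2.1⟩⟩
  obtain ⟨x, hxE, y, hyE, hxy, hfxy⟩ :=
    Finset.exists_ne_map_eq_of_card_lt_of_maps_to hlt hmaps
  obtain ⟨c₁, p⟩ := x
  obtain ⟨c₂, q⟩ := y
  have hpq : p = q := hfxy
  subst hpq
  obtain ⟨a, b⟩ := p
  have hc : c₁ ≠ c₂ := by
    intro h
    exact hxy (by subst h; rfl)
  have hmemE : ∀ c : Fin m, (⟨c, a, b⟩ : (_ : Fin m) × (Fin n × Fin n)) ∈ E →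
      ((u - 1) * d ≤ (a : ℕ) ∧ (a : ℕ) < u * d ∧ M a c = true) ∧
      ((v - 1) * d ≤ (b : ℕ) ∧ (b : ℕ) < v * d ∧ M b c = true) := by
    intro c hx
    rw [hE_def] at hx
    simp only [Finset.mem_sigma, Finset.mem_univ, true_and] at hx
    rw [hS_def] at hx
    simp only [Finset.mem_product, hRu_def, hRv_def, Finset.mem_filter, Finset.mem_univ,
      true_and] at hx
    refine ⟨⟨hx.1.1, ?_, hx.1.2.2⟩, hx.2.1, ?_, hx.2.2.2⟩
    · have h2 : (a : ℕ) < (u - 1 + 1) * d := hx.1.2.1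
      rwa [Nat.sub_add_cancel hu] at h2
    · have h2 : (b : ℕ) < (v - 1 + 1) * d := hx.2.2.1
      rwa [Nat.sub_add_cancel (by omega : 1 ≤ v)] at h2
  have h1 := hmemE c₁ hxE
  have h2 := hmemE c₂ hyE
  rcases lt_or_gt_of_ne (fun h => hc (Fin.ext h) : (c₁ : ℕ) ≠ (c₂ : ℕ)) with h | h
  · exact ⟨a, b, c₁, c₂, h1.1.1, h1.1.2.1, h1.2.1, h1.2.2.1, h,
      h1.1.2.2, h1.2.2.2, h2.1.2.2, h2.2.2.2⟩
  · exact ⟨a, b, c₂, c₁, h2.1.1, h2.1.2.1, h2.2.1, h2.2.2.1, h,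
      h2.1.2.2, h2.2.2.2, h1.1.2.2, h1.2.2.2⟩
end
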